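/- Likelihood-ratio concentration for a single bracket: Let n ≥ 1, μ ∈ ℝⁿ, let u : ℝ → [0, ∞) be measurable, and let b, r > 0 with b r² ≤ 1 and ∫ √( u(z) f_μ(z) ) dz ≤ 1 − b r². Then P_μ( ∏_{i=1}^n ( u(Z_i) / f_μ(Z_i) ) > exp(−(b/2) n r²) ) ≤ exp(−(b/4) n r²). -/

import Mathlib

open MeasureTheory ProbabilityTheory Real
open scoped ENNReal BigOperators

/-- The standard normal density `φ(x) = (2π)^{-1/2} exp(-x²/2)`. -/
noncomputable def phi (x : ℝ) : ℝ := (Real.sqrt (2 * Real.pi))⁻¹ * Real.exp (-(x ^ 2) / 2)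

/-- The compound data distribution: `Z_i ~ N(μ_i, 1)` independent. -/
noncomputable def Pmu {n : ℕ} (μ : Fin n → ℝ) : Measure (Fin n → ℝ) :=
  Measure.pi fun i => gaussianReal (μ i) 1

/-- The mixture density `f_μ(z) = (1/n) Σ_i φ(z - μ_i)` induced by fixed `μ`. -/
noncomputable def fmu {n : ℕ} (μ : Fin n → ℝ) (z : ℝ) : ℝ := (∑ i, phi (z - μ i)) / n

lemma phi_pos (x : ℝ) : 0 < phi x := by
  unfold phi
  have : 0 < Real.sqrt (2 * Real.pi) := Real.sqrt_pos.2 (by positivity)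
  positivity

lemma phi_continuous : Continuous phi := by
  unfold phi; continuity

lemma fmu_pos {n : ℕ} (hn : 1 ≤ n) (μ : Fin n → ℝ) (z : ℝ) : 0 < fmu μ z := by
  unfold fmu
  have hn0 : (0:ℝ) < n := by exact_mod_cast hn
  have : 0 < ∑ i, phi (z - μ i) := by
    haveI : Nonempty (Fin n) := ⟨⟨0, hn⟩⟩
    exact Finset.sum_pos (fun i _ => phi_pos _) Finset.univ_nonempty
  positivity

lemma fmu_meas {n : ℕ} (μ : Fin n → ℝ) : Measurable (fmu μ) := by
  unfold fmu
  exact ((Finset.measurable_sum Finset.univ fun i _ =>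
    (phi_continuous.measurable.comp (measurable_id.sub_const (μ i))))).div_const _

lemma sqrt_div_mul {u f : ℝ} (hu : 0 ≤ u) (hf : 0 < f) :
    Real.sqrt (u / f) * f = Real.sqrt (u * f) := by
  have h1 : u * f = u / f * f ^ 2 := by field_simp
  rw [h1, Real.sqrt_mul (by positivity), Real.sqrt_sq hf.le]

lemma gaussianPDF_eq_phi (m : ℝ) (z : ℝ) :
    gaussianPDF m 1 z = ENNReal.ofReal (phi (z - m)) := by
  unfold gaussianPDF gaussianPDFReal phi
  norm_num

lemma lintegral_gaussian_density (m : ℝ) (g : ℝ → ℝ≥0∞) (hg : Measurable g) :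
    ∫⁻ z, g z ∂gaussianReal m 1 = ∫⁻ z, g z * ENNReal.ofReal (phi (z - m)) := by
  rw [gaussianReal_of_var_ne_zero _ one_ne_zero,
    lintegral_withDensity_eq_lintegral_mul _ (measurable_gaussianPDF m 1) hg]
  congr 1
  funext z
  show gaussianPDF m 1 z * g z = _
  rw [gaussianPDF_eq_phi, mul_comm]

lemma lintegral_pi_prod_aux : ∀ (n : ℕ) (ν : Fin n → Measure ℝ),
    (∀ i, IsProbabilityMeasure (ν i)) →
    ∀ g : Fin n → ℝ → ℝ≥0∞, (∀ i, Measurable (g i)) →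
    ∫⁻ x, ∏ i, g i (x i) ∂Measure.pi ν = ∏ i, ∫⁻ z, g i z ∂ν i := by
  intro n
  induction n with
  | zero =>
    intro ν hν g hg
    haveI := hν
    simp
  | succ n ih =>
    intro ν hν g hg
    haveI := hν
    have hp := measurePreserving_piFinSuccAbove ν 0
    set e := MeasurableEquiv.piFinSuccAbove (fun _ : Fin (n+1) => ℝ) 0 with he
    have key : ∀ x : Fin (n+1) → ℝ,
        ∏ i, g i (x i) = g 0 ((e x).1) * ∏ j, g j.succ ((e x).2 j) := by
      intro x
      rw [Fin.prod_univ_succ]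
      have h2 : ∀ j : Fin n, (e x).2 j = x j.succ := by
        intro j
        show x (Fin.succAbove 0 j) = x j.succ
        rw [Fin.succAbove_zero]
      simp_rw [h2]
      rfl
    have hmeas2 : Measurable fun y : Fin n → ℝ => ∏ j, g (Fin.succ j) (y j) :=
      Finset.measurable_prod _ fun j _ => (hg j.succ).comp (measurable_pi_apply j)
    calc ∫⁻ x, ∏ i, g i (x i) ∂Measure.pi ν
        = ∫⁻ x, g 0 ((e x).1) * ∏ j, g j.succ ((e x).2 j) ∂Measure.pi ν := by
          simp_rw [key]
      _ = ∫⁻ y, g 0 y.1 * ∏ j, g j.succ (y.2 j)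
            ∂((ν 0).prod (Measure.pi fun j => ν (Fin.succAbove 0 j))) := by
          exact hp.lintegral_comp (((hg 0).comp measurable_fst).mul
            (hmeas2.comp measurable_snd))
      _ = (∫⁻ z, g 0 z ∂ν 0) *
            ∫⁻ y, ∏ j, g j.succ (y j) ∂(Measure.pi fun j => ν (Fin.succAbove 0 j)) :=
          lintegral_prod_mul (hg 0).aemeasurable hmeas2.aemeasurable
      _ = ∏ i, ∫⁻ z, g i z ∂ν i := by
          have : (fun j : Fin n => ν (Fin.succAbove 0 j)) = fun j => ν j.succ := by
            funext j; rw [Fin.succAbove_zero]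
          rw [this, ih _ (fun j => hν j.succ) _ (fun j => hg j.succ),
            Fin.prod_univ_succ]

/-- Likelihood-ratio concentration for a single bracket: if the affinity satisfies
`∫ √(u f_μ) ≤ 1 - b r²`, then
`P_μ(∏ u(Z_i)/f_μ(Z_i) > exp(-(b/2) n r²)) ≤ exp(-(b/4) n r²)`. -/
theorem bracket_likelihood_ratio_concentration
    (n : ℕ) (hn : 1 ≤ n) (μ : Fin n → ℝ) (u : ℝ → ℝ)
    (humeas : Measurable u) (hu0 : ∀ z, 0 ≤ u z)
    (b r : ℝ) (hb : 0 < b) (hr : 0 < r) (hbr : b * r ^ 2 ≤ 1)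
    (haff : (∫⁻ z, ENNReal.ofReal (Real.sqrt (u z * fmu μ z))) ≤
      ENNReal.ofReal (1 - b * r ^ 2)) :
    Pmu μ {Z | Real.exp (-(b / 2) * n * r ^ 2) < ∏ i, u (Z i) / fmu μ (Z i)} ≤
      ENNReal.ofReal (Real.exp (-(b / 4) * n * r ^ 2)) := by
  have hn0 : (0:ℝ) < n := by exact_mod_cast hn
  have hfpos : ∀ z, 0 < fmu μ z := fmu_pos hn μ
  have hfmeas : Measurable (fmu μ) := fmu_meas μ
  set g : ℝ → ℝ := fun z => Real.sqrt (u z / fmu μ z) with hgdef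
  have hgmeas : Measurable g := (humeas.div hfmeas).sqrt
  have hg0 : ∀ z, 0 ≤ g z := fun z => Real.sqrt_nonneg _
  set h : ℝ → ℝ := fun z => Real.sqrt (u z * fmu μ z) with hhdef
  have hhmeas : Measurable h := (humeas.mul hfmeas).sqrt
  have hh0 : ∀ z, 0 ≤ h z := fun z => Real.sqrt_nonneg _
  have hkey : ∀ z, g z * fmu μ z = h z := fun z => sqrt_div_mul (hu0 z) (hfpos z)
  have hsumphi : ∀ z, ∑ i, phi (z - μ i) = n * fmu μ z := by
    intro z; unfold fmu; field_simp
  have hphile : ∀ (i : Fin n) z, phi (z - μ i) ≤ n * fmu μ z := by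
    intro i z
    rw [← hsumphi z]
    exact Finset.single_le_sum (f := fun j => phi (z - μ j))
      (fun j _ => (phi_pos _).le) (Finset.mem_univ i)
  have hbr0 : (0:ℝ) ≤ 1 - b * r ^ 2 := by linarith
  -- per-coordinate integral
  set I : Fin n → ℝ≥0∞ := fun i => ∫⁻ z, ENNReal.ofReal (g z) ∂gaussianReal (μ i) 1
    with hIdef
  have hgofmeas : Measurable fun z => ENNReal.ofReal (g z) :=
    ENNReal.measurable_ofReal.comp hgmeas
  have hI : ∀ i, I i = ∫⁻ z, ENNReal.ofReal (g z * phi (z - μ i)) := by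
    intro i
    show ∫⁻ z, ENNReal.ofReal (g z) ∂gaussianReal (μ i) 1 = _
    rw [lintegral_gaussian_density _ _ hgofmeas]
    congr 1
    funext z
    rw [ENNReal.ofReal_mul (hg0 z)]
  have hImeas : ∀ i : Fin n, Measurable fun z => ENNReal.ofReal (g z * phi (z - μ i)) :=
    fun i => ENNReal.measurable_ofReal.comp
      (hgmeas.mul (phi_continuous.measurable.comp (measurable_id.sub_const (μ i))))
  have hpoint_le : ∀ (i : Fin n) z, g z * phi (z - μ i) ≤ n * h z := by
    intro i z
    calc g z * phi (z - μ i) ≤ g z * (n * fmu μ z) :=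
          mul_le_mul_of_nonneg_left (hphile i z) (hg0 z)
      _ = n * (g z * fmu μ z) := by ring
      _ = n * h z := by rw [hkey z]
  have hsum_point : ∀ z, ∑ i, g z * phi (z - μ i) = n * h z := by
    intro z
    rw [← Finset.mul_sum, hsumphi z, ← hkey z]; ring
  have hint_nh : ∫⁻ z, ENNReal.ofReal ((n : ℝ) * h z) ≤
      ENNReal.ofReal n * ENNReal.ofReal (1 - b * r ^ 2) := by
    calc ∫⁻ z, ENNReal.ofReal ((n : ℝ) * h z)
        = ∫⁻ z, ENNReal.ofReal n * ENNReal.ofReal (h z) := by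
          congr 1; funext z; rw [ENNReal.ofReal_mul hn0.le]
      _ = ENNReal.ofReal n * ∫⁻ z, ENNReal.ofReal (h z) :=
          lintegral_const_mul _ (ENNReal.measurable_ofReal.comp hhmeas)
      _ ≤ _ := mul_le_mul_right haff _
  have hIle : ∀ i, I i ≤ ENNReal.ofReal n * ENNReal.ofReal (1 - b * r ^ 2) := by
    intro i
    rw [hI i]
    refine le_trans (lintegral_mono fun z =>
      ENNReal.ofReal_le_ofReal (hpoint_le i z)) hint_nh
  have hfin2 : ENNReal.ofReal (n:ℝ) * ENNReal.ofReal (1 - b * r ^ 2) < ∞ :=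
    ENNReal.mul_lt_top ENNReal.ofReal_lt_top ENNReal.ofReal_lt_top
  have hIfin : ∀ i, I i ≠ ∞ := fun i => (lt_of_le_of_lt (hIle i) hfin2).ne
  have hIsum : ∑ i, I i ≤ ENNReal.ofReal n * ENNReal.ofReal (1 - b * r ^ 2) := by
    calc ∑ i, I i = ∫⁻ z, ∑ i, ENNReal.ofReal (g z * phi (z - μ i)) := by
          simp_rw [hI]
          rw [← lintegral_finset_sum _ fun i _ => hImeas i]
      _ = ∫⁻ z, ENNReal.ofReal ((n : ℝ) * h z) := by
          congr 1; funext z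
          rw [← ENNReal.ofReal_sum_of_nonneg
            (fun i _ => mul_nonneg (hg0 z) (phi_pos _).le), hsum_point z]
      _ ≤ _ := hint_nh
  -- real AM-GM
  set a : Fin n → ℝ := fun i => (I i).toReal with hadef
  have ha0 : ∀ i, 0 ≤ a i := fun i => ENNReal.toReal_nonneg
  have hasum : ∑ i, a i ≤ n * (1 - b * r ^ 2) := by
    have h1 : (∑ i, I i).toReal ≤
        (ENNReal.ofReal n * ENNReal.ofReal (1 - b * r ^ 2)).toReal :=
      ENNReal.toReal_mono hfin2.ne hIsum
    rwa [ENNReal.toReal_sum (fun i _ => hIfin i), ENNReal.toReal_mul,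
      ENNReal.toReal_ofReal hn0.le, ENNReal.toReal_ofReal hbr0] at h1
  have hprod_a0 : 0 ≤ ∏ i, a i := Finset.prod_nonneg fun i _ => ha0 i
  have hAMGM : ∏ i, a i ≤ (1 - b * r ^ 2) ^ n := by
    have hw : ∑ _i : Fin n, (1 / n : ℝ) = 1 := by
      rw [Finset.sum_const, Finset.card_univ, Fintype.card_fin, nsmul_eq_mul]
      field_simp
    have h1 := Real.geom_mean_le_arith_mean_weighted Finset.univ (fun _ => 1 / n) a
      (fun i _ => by positivity) hw (fun i _ => ha0 i)
    have h2 : ∑ i, (1 / n : ℝ) * a i ≤ 1 - b * r ^ 2 := by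
      rw [← Finset.mul_sum]
      calc (1 / n : ℝ) * ∑ i, a i ≤ (1 / n) * (n * (1 - b * r ^ 2)) := by
            apply mul_le_mul_of_nonneg_left hasum (by positivity)
        _ = 1 - b * r ^ 2 := by field_simp
    have h3 : (∏ i, a i) ^ (1 / n : ℝ) ≤ 1 - b * r ^ 2 := by
      rw [← Real.finset_prod_rpow Finset.univ a (fun i _ => ha0 i)]
      exact h1.trans h2
    have h4 : ((∏ i, a i) ^ (1 / n : ℝ)) ^ n ≤ (1 - b * r ^ 2) ^ n :=
      pow_le_pow_left₀ (Real.rpow_nonneg hprod_a0 _) h3 n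
    rwa [← Real.rpow_natCast ((∏ i, a i) ^ (1 / n : ℝ)) n,
      ← Real.rpow_mul hprod_a0, one_div, inv_mul_cancel₀ (by positivity : (n:ℝ) ≠ 0),
      Real.rpow_one] at h4
  -- the full lintegral
  set F : (Fin n → ℝ) → ℝ≥0∞ := fun Z => ∏ i, ENNReal.ofReal (g (Z i)) with hFdef
  have hFmeas : Measurable F :=
    Finset.measurable_prod _ fun i _ => hgofmeas.comp (measurable_pi_apply i)
  have hJ : ∫⁻ Z, F Z ∂Pmu μ = ∏ i, I i := by
    rw [hFdef]
    exact lintegral_pi_prod_aux n _ (fun i => inferInstance)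
      (fun _ z => ENNReal.ofReal (g z)) (fun _ => hgofmeas)
  have hprodI : ∏ i, I i = ENNReal.ofReal (∏ i, a i) := by
    rw [ENNReal.ofReal_prod_of_nonneg fun i _ => ha0 i]
    exact Finset.prod_congr rfl fun i _ => (ENNReal.ofReal_toReal (hIfin i)).symm
  -- Markov
  set t := Real.exp (-(b / 4) * n * r ^ 2) with htdef
  have ht0 : 0 < t := Real.exp_pos _
  have hsubset : {Z : Fin n → ℝ | Real.exp (-(b / 2) * n * r ^ 2) <
      ∏ i, u (Z i) / fmu μ (Z i)} ⊆ {Z | ENNReal.ofReal t ≤ F Z} := by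
    intro Z hZ
    simp only [Set.mem_setOf_eq] at hZ ⊢
    have hx0 : ∀ i : Fin n, 0 ≤ u (Z i) / fmu μ (Z i) :=
      fun i => div_nonneg (hu0 _) (hfpos _).le
    have hsq : t ^ 2 ≤ ∏ i, u (Z i) / fmu μ (Z i) := by
      have : t ^ 2 = Real.exp (-(b / 2) * n * r ^ 2) := by
        rw [htdef, ← Real.exp_nat_mul]
        congr 1
        push_cast
        ring
      rw [this]
      exact hZ.le
    have hle : t ≤ ∏ i, g (Z i) := by
      have hgp : ∏ i, g (Z i) = Real.sqrt (∏ i, u (Z i) / fmu μ (Z i)) :=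
        Finset.prod_congr rfl (fun i _ => rfl) |>.trans (by
          simp_rw [hgdef]
          rw [Real.sqrt_eq_rpow]
          simp_rw [fun i : Fin n => Real.sqrt_eq_rpow (u (Z i) / fmu μ (Z i))]
          exact Real.finset_prod_rpow Finset.univ _ (fun i _ => hx0 i) _)
      rw [hgp]
      exact Real.le_sqrt_of_sq_le hsq
    calc ENNReal.ofReal t ≤ ENNReal.ofReal (∏ i, g (Z i)) :=
          ENNReal.ofReal_le_ofReal hle
      _ = F Z := (ENNReal.ofReal_prod_of_nonneg
            (s := Finset.univ) (f := fun i : Fin n => g (Z i)) fun i _ => hg0 _)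
  have hmarkov : ENNReal.ofReal t * Pmu μ {Z | ENNReal.ofReal t ≤ F Z} ≤
      ∫⁻ Z, F Z ∂Pmu μ := mul_meas_ge_le_lintegral₀ hFmeas.aemeasurable _
  -- the final real inequality
  have hreal : (1 - b * r ^ 2) ^ n ≤ t * t := by
    have h1 : 1 - b * r ^ 2 ≤ Real.exp (-(b * r ^ 2)) := by
      linarith [Real.add_one_le_exp (-(b * r ^ 2))]
    calc (1 - b * r ^ 2) ^ n ≤ (Real.exp (-(b * r ^ 2))) ^ n :=
          pow_le_pow_left₀ hbr0 h1 n
      _ = Real.exp (n * (-(b * r ^ 2))) := (Real.exp_nat_mul _ n).symm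
      _ ≤ t * t := by
          rw [htdef, ← Real.exp_add]
          apply Real.exp_le_exp.2
          have hrr : (0:ℝ) < r ^ 2 := by positivity
          nlinarith [hn0, hb, mul_pos hb hrr]
  -- put it together
  have hchain : ENNReal.ofReal t *
      Pmu μ {Z : Fin n → ℝ | Real.exp (-(b / 2) * n * r ^ 2) <
        ∏ i, u (Z i) / fmu μ (Z i)} ≤ ENNReal.ofReal t * ENNReal.ofReal t := by
    calc ENNReal.ofReal t * Pmu μ _ ≤ ENNReal.ofReal t *
          Pmu μ {Z | ENNReal.ofReal t ≤ F Z} :=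
          mul_le_mul_right (measure_mono hsubset) _
      _ ≤ ∫⁻ Z, F Z ∂Pmu μ := hmarkov
      _ = ENNReal.ofReal (∏ i, a i) := by rw [hJ, hprodI]
      _ ≤ ENNReal.ofReal ((1 - b * r ^ 2) ^ n) := ENNReal.ofReal_le_ofReal hAMGM
      _ ≤ ENNReal.ofReal (t * t) := ENNReal.ofReal_le_ofReal hreal
      _ = ENNReal.ofReal t * ENNReal.ofReal t := ENNReal.ofReal_mul ht0.le
  exact (ENNReal.mul_le_mul_iff_right (by simp [ht0]) ENNReal.ofReal_ne_top).1 hchain
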